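/- Let p, e : (0,∞)² → ℝ be smooth with ∂p/∂ϱ > 0 and C_v := ∂e/∂θ > 0, satisfying the Gibbs relation θ ds = de + p d(1/ϱ) for a smooth entropy s. Fix ϱ̄, θ̄ > 0 and define the relative Helmholtz function Ψ(ϱ,θ) = H(ϱ,θ) - (ϱ - ϱ̄)∂_ϱH(ϱ̄,θ̄) - H(ϱ̄,θ̄), where H(ϱ,θ) = ϱ(e(ϱ,θ) - θ̄ s(ϱ,θ)). Then Ψ(ϱ̄,θ̄) = 0, ∇Ψ(ϱ̄,θ̄) = 0, and the Hessian of Ψ at (ϱ̄,θ̄) is positive definite; consequently there exist constants 0 < C₁ ≤ C₂ and a neighborhood of (ϱ̄,θ̄) on which C₁(|ϱ-ϱ̄|² + |θ-θ̄|²) ≤ Ψ(ϱ,θ) ≤ C₂(|ϱ-ϱ̄|² + |θ-θ̄|²). -/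

import Mathlib

open Set

section helpers
open Set

lemma aux_nonneg (f f' f'' : ℝ → ℝ) (a δ : ℝ) (hδ : 0 < δ)
    (hf : ∀ x ∈ Ioo (a - δ) (a + δ), HasDerivAt f (f' x) x)
    (hf' : ∀ x ∈ Ioo (a - δ) (a + δ), HasDerivAt f' (f'' x) x)
    (h'' : ∀ x ∈ Ioo (a - δ) (a + δ), 0 ≤ f'' x)
    (h0 : f a = 0) (h1 : f' a = 0) :
    ∀ x ∈ Ioo (a - δ) (a + δ), 0 ≤ f x := by
  have ha : a ∈ Ioo (a - δ) (a + δ) := by constructor <;> linarith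
  have hmono : MonotoneOn f' (Ioo (a - δ) (a + δ)) := by
    apply monotoneOn_of_deriv_nonneg (convex_Ioo _ _)
    · exact fun x hx => ((hf' x hx).differentiableAt).continuousAt.continuousWithinAt
    · intro x hx
      rw [interior_Ioo] at hx
      exact ((hf' x hx).differentiableAt).differentiableWithinAt
    · intro x hx
      rw [interior_Ioo] at hx
      rw [(hf' x hx).deriv]
      exact h'' x hx
  intro x hx
  rcases lt_trichotomy x a with hxa | hxa | hxa
  · have hsub : Icc x a ⊆ Ioo (a - δ) (a + δ) := by
      intro y hy; exact ⟨lt_of_lt_of_le hx.1 hy.1, lt_of_le_of_lt hy.2 ha.2⟩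
    obtain ⟨ξ, hξ, hslope⟩ := exists_hasDerivAt_eq_slope f f' hxa
      (fun y hy => ((hf y (hsub hy)).differentiableAt).continuousAt.continuousWithinAt)
      (fun y hy => hf y (hsub ⟨le_of_lt hy.1, le_of_lt hy.2⟩))
    have hξmem : ξ ∈ Ioo (a - δ) (a + δ) := hsub ⟨le_of_lt hξ.1, le_of_lt hξ.2⟩
    have : f' ξ ≤ f' a := by
      rw [← h1] at *; rw [h1]
      exact hmono hξmem ha (le_of_lt hξ.2)
    rw [h1] at this
    rw [h0] at hslope
    have hax : 0 < a - x := by linarith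
    have h2 : (0 - f x) / (a - x) ≤ 0 := hslope ▸ this
    have h3 := (div_le_iff₀ hax).mp h2
    linarith
  · rw [hxa, h0]
  · have hsub : Icc a x ⊆ Ioo (a - δ) (a + δ) := by
      intro y hy; exact ⟨lt_of_lt_of_le ha.1 hy.1, lt_of_le_of_lt hy.2 hx.2⟩
    obtain ⟨ξ, hξ, hslope⟩ := exists_hasDerivAt_eq_slope f f' hxa
      (fun y hy => ((hf y (hsub hy)).differentiableAt).continuousAt.continuousWithinAt)
      (fun y hy => hf y (hsub ⟨le_of_lt hy.1, le_of_lt hy.2⟩))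
    have hξmem : ξ ∈ Ioo (a - δ) (a + δ) := hsub ⟨le_of_lt hξ.1, le_of_lt hξ.2⟩
    have : f' a ≤ f' ξ := hmono ha hξmem (le_of_lt hξ.1)
    rw [h1] at this
    rw [h0] at hslope
    have hax : 0 < x - a := by linarith
    have h2 : 0 ≤ (f x - 0) / (x - a) := hslope ▸ this
    have h3 := (le_div_iff₀ hax).mp h2
    linarith

lemma aux_quad (f f' f'' : ℝ → ℝ) (a δ m M : ℝ) (hδ : 0 < δ)
    (hf : ∀ x ∈ Ioo (a - δ) (a + δ), HasDerivAt f (f' x) x)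
    (hf' : ∀ x ∈ Ioo (a - δ) (a + δ), HasDerivAt f' (f'' x) x)
    (hb : ∀ x ∈ Ioo (a - δ) (a + δ), m ≤ f'' x ∧ f'' x ≤ M)
    (h0 : f a = 0) (h1 : f' a = 0) :
    ∀ x ∈ Ioo (a - δ) (a + δ), m / 2 * (x - a) ^ 2 ≤ f x ∧ f x ≤ M / 2 * (x - a) ^ 2 := by
  have hq : ∀ x : ℝ, HasDerivAt (fun y => (y - a) ^ 2) (2 * (x - a)) x := by
    intro x
    have := ((hasDerivAt_id x).sub_const a).fun_pow 2
    simpa using this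
  intro x hx
  constructor
  · have := aux_nonneg (fun y => f y - m / 2 * (y - a) ^ 2)
      (fun y => f' y - m * (y - a)) (fun y => f'' y - m) a δ hδ
      (fun y hy => (hf y hy).sub (by simpa [mul_comm, mul_assoc, mul_left_comm] using
        ((hq y).const_mul (m / 2)).congr_deriv (by ring)))
      (fun y hy => (hf' y hy).sub (by
        simpa using ((hasDerivAt_id y).sub_const a).const_mul m))
      (fun y hy => by have := (hb y hy).1; show (0:ℝ) ≤ f'' y - m; linarith)
      (by simp [h0]) (by simp [h1]) x hx
    linarith
  · have := aux_nonneg (fun y => M / 2 * (y - a) ^ 2 - f y)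
      (fun y => M * (y - a) - f' y) (fun y => M - f'' y) a δ hδ
      (fun y hy => (by simpa [mul_comm, mul_assoc, mul_left_comm] using
        ((hq y).const_mul (M / 2)).congr_deriv (by ring) : HasDerivAt (fun z => M / 2 * (z - a) ^ 2) (M * (y - a)) y).sub (hf y hy))
      (fun y hy => (by simpa using ((hasDerivAt_id y).sub_const a).const_mul M : HasDerivAt (fun z => M * (z - a)) M y).sub (hf' y hy))
      (fun y hy => by have := (hb y hy).2; show (0:ℝ) ≤ M - f'' y; linarith)
      (by simp [h0]) (by simp [h1]) x hx
    linarith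

noncomputable def pd1 (f : ℝ × ℝ → ℝ) (q : ℝ × ℝ) : ℝ := fderiv ℝ f q (1, 0)
noncomputable def pd2 (f : ℝ × ℝ → ℝ) (q : ℝ × ℝ) : ℝ := fderiv ℝ f q (0, 1)

lemma slice1_hasDerivAt {f : ℝ × ℝ → ℝ} {q : ℝ × ℝ} (hf : DifferentiableAt ℝ f q) :
    HasDerivAt (fun r => f (r, q.2)) (pd1 f q) q.1 := by
  have hline : HasDerivAt (fun r : ℝ => ((r : ℝ), q.2)) ((1 : ℝ), (0 : ℝ)) q.1 :=
    (hasDerivAt_id _).prodMk (hasDerivAt_const _ _)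
  exact hf.hasFDerivAt.comp_hasDerivAt q.1 hline

lemma slice2_hasDerivAt {f : ℝ × ℝ → ℝ} {q : ℝ × ℝ} (hf : DifferentiableAt ℝ f q) :
    HasDerivAt (fun t => f (q.1, t)) (pd2 f q) q.2 := by
  have hline : HasDerivAt (fun t : ℝ => (q.1, (t : ℝ))) ((0 : ℝ), (1 : ℝ)) q.2 :=
    (hasDerivAt_const _ _).prodMk (hasDerivAt_id _)
  exact hf.hasFDerivAt.comp_hasDerivAt q.2 hline

lemma contDiffOn_pd1 {f : ℝ × ℝ → ℝ} {U : Set (ℝ × ℝ)} (hf : ContDiffOn ℝ (⊤ : ℕ∞) f U)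
    (hU : IsOpen U) : ContDiffOn ℝ (⊤ : ℕ∞) (pd1 f) U :=
  (hf.fderiv_of_isOpen hU (by simp)).clm_apply contDiffOn_const

lemma contDiffOn_pd2 {f : ℝ × ℝ → ℝ} {U : Set (ℝ × ℝ)} (hf : ContDiffOn ℝ (⊤ : ℕ∞) f U)
    (hU : IsOpen U) : ContDiffOn ℝ (⊤ : ℕ∞) (pd2 f) U :=
  (hf.fderiv_of_isOpen hU (by simp)).clm_apply contDiffOn_const

lemma diffAt_of_contDiffOn {f : ℝ × ℝ → ℝ} {U : Set (ℝ × ℝ)} (hf : ContDiffOn ℝ (⊤ : ℕ∞) f U)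
    (hU : IsOpen U) {q : ℝ × ℝ} (hq : q ∈ U) : DifferentiableAt ℝ f q :=
  (hf.contDiffAt (hU.mem_nhds hq)).differentiableAt (by simp)
end helpers

theorem relative_helmholtz_coercivity
    (p e s : ℝ → ℝ → ℝ) (ϱb θb : ℝ) (hϱb : 0 < ϱb) (hθb : 0 < θb)
    (hp : ContDiffOn ℝ (⊤ : ℕ∞) (fun q : ℝ × ℝ => p q.1 q.2) (Set.Ioi 0 ×ˢ Set.Ioi 0))
    (he : ContDiffOn ℝ (⊤ : ℕ∞) (fun q : ℝ × ℝ => e q.1 q.2) (Set.Ioi 0 ×ˢ Set.Ioi 0))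
    (hs : ContDiffOn ℝ (⊤ : ℕ∞) (fun q : ℝ × ℝ => s q.1 q.2) (Set.Ioi 0 ×ˢ Set.Ioi 0))
    (hpϱ : ∀ ϱ θ : ℝ, 0 < ϱ → 0 < θ → 0 < deriv (fun r => p r θ) ϱ)
    (hCv : ∀ ϱ θ : ℝ, 0 < ϱ → 0 < θ → 0 < deriv (fun t => e ϱ t) θ)
    (hGibbsθ : ∀ ϱ θ : ℝ, 0 < ϱ → 0 < θ →
      deriv (fun t => s ϱ t) θ = (1 / θ) * deriv (fun t => e ϱ t) θ)
    (hGibbsϱ : ∀ ϱ θ : ℝ, 0 < ϱ → 0 < θ →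
      deriv (fun r => s r θ) ϱ = (1 / θ) * (deriv (fun r => e r θ) ϱ - p ϱ θ / ϱ ^ 2))
    (H Ψ : ℝ → ℝ → ℝ)
    (hH : ∀ ϱ θ, H ϱ θ = ϱ * (e ϱ θ - θb * s ϱ θ))
    (hΨ : ∀ ϱ θ, Ψ ϱ θ = H ϱ θ - (ϱ - ϱb) * deriv (fun r => H r θb) ϱb - H ϱb θb) :
    Ψ ϱb θb = 0 ∧
    deriv (fun r => Ψ r θb) ϱb = 0 ∧ deriv (fun t => Ψ ϱb t) θb = 0 ∧
    (0 < deriv (deriv (fun r => Ψ r θb)) ϱb ∧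
      0 < deriv (deriv (fun r => Ψ r θb)) ϱb * deriv (deriv (fun t => Ψ ϱb t)) θb
          - (deriv (fun r => deriv (fun t => Ψ r t) θb) ϱb) ^ 2) ∧
    ∃ C₁ C₂ : ℝ, 0 < C₁ ∧ C₁ ≤ C₂ ∧ ∃ δ > 0,
      ∀ ϱ θ : ℝ, |ϱ - ϱb| < δ → |θ - θb| < δ →
        C₁ * (|ϱ - ϱb| ^ 2 + |θ - θb| ^ 2) ≤ Ψ ϱ θ ∧
        Ψ ϱ θ ≤ C₂ * (|ϱ - ϱb| ^ 2 + |θ - θb| ^ 2) := by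
  have hUo : IsOpen (Ioi (0:ℝ) ×ˢ Ioi (0:ℝ)) := isOpen_Ioi.prod isOpen_Ioi
  set U : Set (ℝ × ℝ) := Ioi 0 ×ˢ Ioi 0 with hUdef
  set E2 : ℝ × ℝ → ℝ := fun q => e q.1 q.2 with hE2def
  set S2 : ℝ × ℝ → ℝ := fun q => s q.1 q.2 with hS2def
  set P2 : ℝ × ℝ → ℝ := fun q => p q.1 q.2 with hP2def
  set c : ℝ := deriv (fun r => H r θb) ϱb with hcdef
  have hmemU : ∀ {a b : ℝ}, 0 < a → 0 < b → ((a, b) : ℝ × ℝ) ∈ U := fun ha hb =>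
    Set.mem_prod.mpr ⟨Set.mem_Ioi.mpr ha, Set.mem_Ioi.mpr hb⟩
  have hqb : ((ϱb, θb) : ℝ × ℝ) ∈ U := hmemU hϱb hθb
  have hEd : ∀ q ∈ U, DifferentiableAt ℝ E2 q := fun q hq => diffAt_of_contDiffOn he hUo hq
  have hSd : ∀ q ∈ U, DifferentiableAt ℝ S2 q := fun q hq => diffAt_of_contDiffOn hs hUo hq
  have hPd : ∀ q ∈ U, DifferentiableAt ℝ P2 q := fun q hq => diffAt_of_contDiffOn hp hUo hq
  -- slice derivative facts
  have hE1 : ∀ ϱ θ : ℝ, 0 < ϱ → 0 < θ → HasDerivAt (fun r => e r θ) (pd1 E2 (ϱ, θ)) ϱ :=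
    fun ϱ θ h1 h2 => slice1_hasDerivAt (hEd _ (hmemU h1 h2))
  have hS1 : ∀ ϱ θ : ℝ, 0 < ϱ → 0 < θ → HasDerivAt (fun r => s r θ) (pd1 S2 (ϱ, θ)) ϱ :=
    fun ϱ θ h1 h2 => slice1_hasDerivAt (hSd _ (hmemU h1 h2))
  have hP1 : ∀ ϱ θ : ℝ, 0 < ϱ → 0 < θ → HasDerivAt (fun r => p r θ) (pd1 P2 (ϱ, θ)) ϱ :=
    fun ϱ θ h1 h2 => slice1_hasDerivAt (hPd _ (hmemU h1 h2))
  have hE2 : ∀ ϱ θ : ℝ, 0 < ϱ → 0 < θ → HasDerivAt (fun t => e ϱ t) (pd2 E2 (ϱ, θ)) θ :=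
    fun ϱ θ h1 h2 => slice2_hasDerivAt (hEd _ (hmemU h1 h2))
  have hS2' : ∀ ϱ θ : ℝ, 0 < ϱ → 0 < θ → HasDerivAt (fun t => s ϱ t) (pd2 S2 (ϱ, θ)) θ :=
    fun ϱ θ h1 h2 => slice2_hasDerivAt (hSd _ (hmemU h1 h2))
  -- hypotheses in pd form
  have hGθ : ∀ ϱ θ : ℝ, 0 < ϱ → 0 < θ → pd2 S2 (ϱ, θ) = (1 / θ) * pd2 E2 (ϱ, θ) := by
    intro ϱ θ h1 h2
    have h := hGibbsθ ϱ θ h1 h2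
    rwa [(hS2' ϱ θ h1 h2).deriv, (hE2 ϱ θ h1 h2).deriv] at h
  have hGϱ : ∀ ϱ θ : ℝ, 0 < ϱ → 0 < θ →
      pd1 S2 (ϱ, θ) = (1 / θ) * (pd1 E2 (ϱ, θ) - p ϱ θ / ϱ ^ 2) := by
    intro ϱ θ h1 h2
    have h := hGibbsϱ ϱ θ h1 h2
    rwa [(hS1 ϱ θ h1 h2).deriv, (hE1 ϱ θ h1 h2).deriv] at h
  have hpϱ' : ∀ ϱ θ : ℝ, 0 < ϱ → 0 < θ → 0 < pd1 P2 (ϱ, θ) := by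
    intro ϱ θ h1 h2
    have h := hpϱ ϱ θ h1 h2
    rwa [(hP1 ϱ θ h1 h2).deriv] at h
  have hCv' : ∀ ϱ θ : ℝ, 0 < ϱ → 0 < θ → 0 < pd2 E2 (ϱ, θ) := by
    intro ϱ θ h1 h2
    have h := hCv ϱ θ h1 h2
    rwa [(hE2 ϱ θ h1 h2).deriv] at h
  -- first ϱ-derivative of H(·, θb)
  have hHslice : ∀ r : ℝ, 0 < r →
      HasDerivAt (fun r' => H r' θb) (e r θb - θb * s r θb + p r θb / r) r := by
    intro r hr
    have hfun : (fun r' => H r' θb) = fun r' => r' * (e r' θb - θb * s r' θb) :=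
      funext fun r' => hH r' θb
    rw [hfun]
    have hprod := (hasDerivAt_id' r).fun_mul ((hE1 r θb hr hθb).fun_sub ((hS1 r θb hr hθb).const_mul θb))
    refine hprod.congr_deriv ?_
    rw [hGϱ r θb hr hθb]
    field_simp
    ring
  have hc : c = e ϱb θb - θb * s ϱb θb + p ϱb θb / ϱb := by
    rw [hcdef]; exact (hHslice ϱb hϱb).deriv
  -- first ϱ-derivative of Ψ(·, θb)
  have hΨ1' : ∀ r : ℝ, 0 < r →
      HasDerivAt (fun r' => Ψ r' θb) (e r θb - θb * s r θb + p r θb / r - c) r := by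
    intro r hr
    have hfun : (fun r' => Ψ r' θb) = fun r' => H r' θb - (r' - ϱb) * c - H ϱb θb :=
      funext fun r' => hΨ r' θb
    rw [hfun]
    have hlin : HasDerivAt (fun r' : ℝ => (r' - ϱb) * c) c r := by
      simpa using ((hasDerivAt_id r).sub_const ϱb).mul_const c
    exact ((hHslice r hr).sub hlin).sub_const _
  -- second ϱ-derivative of Ψ(·, θb)
  have hΨ1'' : ∀ r : ℝ, 0 < r →
      HasDerivAt (fun r' => e r' θb - θb * s r' θb + p r' θb / r' - c)
        (pd1 P2 (r, θb) / r) r := by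
    intro r hr
    have h4 : HasDerivAt (fun r' => p r' θb / r')
        ((pd1 P2 (r, θb) * r - p r θb * 1) / r ^ 2) r :=
      (hP1 r θb hr hθb).div (hasDerivAt_id r) (ne_of_gt hr)
    have h5 := (((hE1 r θb hr hθb).fun_sub ((hS1 r θb hr hθb).const_mul θb)).fun_add h4).sub_const c
    refine h5.congr_deriv ?_
    rw [hGϱ r θb hr hθb]
    field_simp
    ring
  -- first θ-derivative of Ψ(ϱ, ·)
  have hΨ2' : ∀ ϱ θ : ℝ, 0 < ϱ → 0 < θ →
      HasDerivAt (fun t => Ψ ϱ t) (ϱ * pd2 E2 (ϱ, θ) * (1 - θb / θ)) θ := by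
    intro ϱ θ h1 h2
    have hfun : (fun t => Ψ ϱ t) =
        fun t => ϱ * (e ϱ t - θb * s ϱ t) - (ϱ - ϱb) * c - H ϱb θb :=
      funext fun t => by rw [hΨ, hH]
    rw [hfun]
    have h5 := ((((hE2 ϱ θ h1 h2).fun_sub ((hS2' ϱ θ h1 h2).const_mul θb)).const_mul ϱ).sub_const
      ((ϱ - ϱb) * c)).sub_const (H ϱb θb)
    refine h5.congr_deriv ?_
    rw [hGθ ϱ θ h1 h2]
    field_simp
  -- second θ-derivative of Ψ(ϱ, ·)
  have hpd2Ed : ∀ q ∈ U, DifferentiableAt ℝ (pd2 E2) q :=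
    fun q hq => diffAt_of_contDiffOn (contDiffOn_pd2 he hUo) hUo hq
  have hΨ2'' : ∀ ϱ θ : ℝ, 0 < ϱ → 0 < θ →
      HasDerivAt (fun t => ϱ * pd2 E2 (ϱ, t) * (1 - θb / t))
        (ϱ * (pd2 (pd2 E2) (ϱ, θ) * (1 - θb / θ) + pd2 E2 (ϱ, θ) * (θb / θ ^ 2))) θ := by
    intro ϱ θ h1 h2
    have hE' : HasDerivAt (fun t => pd2 E2 (ϱ, t)) (pd2 (pd2 E2) (ϱ, θ)) θ :=
      slice2_hasDerivAt (hpd2Ed _ (hmemU h1 h2))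
    have hq : HasDerivAt (fun t : ℝ => 1 - θb / t) (θb / θ ^ 2) θ := by
      have := ((hasDerivAt_const θ θb).fun_div (hasDerivAt_id' θ) (ne_of_gt h2)).const_sub 1
      refine this.congr_deriv ?_
      field_simp
      ring
    have := (hE'.const_mul ϱ).fun_mul hq
    refine this.congr_deriv ?_
    ring
  -- the positive quantities
  have hApos : 0 < pd1 P2 (ϱb, θb) / ϱb := div_pos (hpϱ' ϱb θb hϱb hθb) hϱb
  have hCcval : ϱb * (pd2 (pd2 E2) (ϱb, θb) * (1 - θb / θb) + pd2 E2 (ϱb, θb) * (θb / θb ^ 2))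
      = ϱb * pd2 E2 (ϱb, θb) / θb := by
    rw [div_self (ne_of_gt hθb)]
    field_simp
    ring
  have hCcpos : 0 < ϱb * (pd2 (pd2 E2) (ϱb, θb) * (1 - θb / θb)
      + pd2 E2 (ϱb, θb) * (θb / θb ^ 2)) := by
    rw [hCcval]
    exact div_pos (mul_pos hϱb (hCv' ϱb θb hϱb hθb)) hθb
  -- part 1
  have part1 : Ψ ϱb θb = 0 := by rw [hΨ]; ring
  -- part 2
  have part2 : deriv (fun r => Ψ r θb) ϱb = 0 := by
    rw [(hΨ1' ϱb hϱb).deriv, hc]; ring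
  -- part 3
  have part3 : deriv (fun t => Ψ ϱb t) θb = 0 := by
    rw [(hΨ2' ϱb θb hϱb hθb).deriv, div_self (ne_of_gt hθb)]; ring
  -- second derivatives at the point
  have hd2ϱ : deriv (deriv (fun r => Ψ r θb)) ϱb = pd1 P2 (ϱb, θb) / ϱb := by
    have hev : deriv (fun r => Ψ r θb)
        =ᶠ[nhds ϱb] (fun r => e r θb - θb * s r θb + p r θb / r - c) := by
      filter_upwards [Ioi_mem_nhds hϱb] with r hr
      exact (hΨ1' r hr).deriv
    rw [hev.deriv_eq, (hΨ1'' ϱb hϱb).deriv]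
  have hd2θ : deriv (deriv (fun t => Ψ ϱb t)) θb
      = ϱb * (pd2 (pd2 E2) (ϱb, θb) * (1 - θb / θb) + pd2 E2 (ϱb, θb) * (θb / θb ^ 2)) := by
    have hev : deriv (fun t => Ψ ϱb t)
        =ᶠ[nhds θb] (fun t => ϱb * pd2 E2 (ϱb, t) * (1 - θb / t)) := by
      filter_upwards [Ioi_mem_nhds hθb] with t ht
      exact (hΨ2' ϱb t hϱb ht).deriv
    rw [hev.deriv_eq, (hΨ2'' ϱb θb hϱb hθb).deriv]
  have hmixed : deriv (fun r => deriv (fun t => Ψ r t) θb) ϱb = 0 := by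
    have hev : (fun r => deriv (fun t => Ψ r t) θb) =ᶠ[nhds ϱb] (fun _ => (0 : ℝ)) := by
      filter_upwards [Ioi_mem_nhds hϱb] with r hr
      rw [(hΨ2' r θb hr hθb).deriv, div_self (ne_of_gt hθb)]
      ring
    rw [hev.deriv_eq, deriv_const]
  refine ⟨part1, part2, part3, ⟨by rw [hd2ϱ]; exact hApos, ?_⟩, ?_⟩
  · rw [hd2ϱ, hd2θ, hmixed]
    have := mul_pos hApos hCcpos
    nlinarith
  -- coercivity
  · set A : ℝ := pd1 P2 (ϱb, θb) / ϱb with hAdef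
    set Cc : ℝ := ϱb * (pd2 (pd2 E2) (ϱb, θb) * (1 - θb / θb)
      + pd2 E2 (ϱb, θb) * (θb / θb ^ 2)) with hCcdef
    have hΨ1''cont : ContinuousAt (fun r : ℝ => pd1 P2 (r, θb) / r) ϱb := by
      have hcont : ContinuousAt (pd1 P2) (ϱb, θb) :=
        (contDiffOn_pd1 hp hUo).continuousOn.continuousAt (hUo.mem_nhds hqb)
      have hl : ContinuousAt (fun r : ℝ => ((r, θb) : ℝ × ℝ)) ϱb :=
        continuousAt_id.prodMk continuousAt_const
      have hnum : ContinuousAt (fun r : ℝ => pd1 P2 (r, θb)) ϱb :=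
        ContinuousAt.comp (f := fun r : ℝ => ((r, θb) : ℝ × ℝ)) hcont hl
      exact hnum.div continuousAt_id (ne_of_gt hϱb)
    have hGcont : ContinuousAt (fun q : ℝ × ℝ =>
        q.1 * (pd2 (pd2 E2) q * (1 - θb / q.2) + pd2 E2 q * (θb / q.2 ^ 2))) (ϱb, θb) := by
      have c1 : ContinuousAt (pd2 (pd2 E2)) (ϱb, θb) :=
        (contDiffOn_pd2 (contDiffOn_pd2 he hUo) hUo).continuousOn.continuousAt
          (hUo.mem_nhds hqb)
      have c2 : ContinuousAt (pd2 E2) (ϱb, θb) :=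
        (contDiffOn_pd2 he hUo).continuousOn.continuousAt (hUo.mem_nhds hqb)
      exact continuousAt_fst.mul ((c1.mul (continuousAt_const.sub
        (continuousAt_const.div continuousAt_snd (ne_of_gt hθb)))).add (c2.mul
        (continuousAt_const.div (continuousAt_snd.pow 2) (pow_ne_zero 2 (ne_of_gt hθb)))))
    have h1 : ∀ᶠ r in nhds ϱb, dist (pd1 P2 (r, θb) / r) A < A / 2 :=
      Metric.tendsto_nhds.mp hΨ1''cont (A / 2) (half_pos hApos)
    have h2 : ∀ᶠ q in nhds ((ϱb, θb) : ℝ × ℝ),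
        dist (q.1 * (pd2 (pd2 E2) q * (1 - θb / q.2) + pd2 E2 q * (θb / q.2 ^ 2))) Cc
          < Cc / 2 :=
      Metric.tendsto_nhds.mp hGcont (Cc / 2) (half_pos hCcpos)
    clear_value A Cc
    rw [Metric.eventually_nhds_iff] at h1 h2
    obtain ⟨δ1, hδ1, hδ1p⟩ := h1
    obtain ⟨δ2, hδ2, hδ2p⟩ := h2
    have hδpos : 0 < min (min δ1 δ2) (min ϱb θb) := lt_min (lt_min hδ1 hδ2) (lt_min hϱb hθb)
    set δ : ℝ := min (min δ1 δ2) (min ϱb θb) with hδdef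
    refine ⟨min (A / 4) (Cc / 4), max A Cc, by positivity, ?_, δ, hδpos, ?_⟩
    · calc min (A / 4) (Cc / 4) ≤ A / 4 := min_le_left _ _
        _ ≤ A := by linarith
        _ ≤ max A Cc := le_max_left _ _
    · intro ϱ θ hϱd hθd
      have hδϱ : δ ≤ ϱb := le_trans (min_le_right _ _) (min_le_left _ _)
      have hδθ : δ ≤ θb := le_trans (min_le_right _ _) (min_le_right _ _)
      have hδ1' : δ ≤ δ1 := le_trans (min_le_left _ _) (min_le_left _ _)
      have hδ2' : δ ≤ δ2 := le_trans (min_le_left _ _) (min_le_right _ _)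
      have habsϱ := abs_lt.mp hϱd
      have habsθ := abs_lt.mp hθd
      have hϱpos : 0 < ϱ := by linarith
      have hθpos : 0 < θ := by linarith
      have hxpos : ∀ x ∈ Ioo (ϱb - δ) (ϱb + δ), (0:ℝ) < x := by
        intro x hx; rw [Set.mem_Ioo] at hx; linarith
      have htpos : ∀ t ∈ Ioo (θb - δ) (θb + δ), (0:ℝ) < t := by
        intro t ht; rw [Set.mem_Ioo] at ht; linarith
      have hb1 : ∀ x ∈ Ioo (ϱb - δ) (ϱb + δ),
          A / 2 ≤ pd1 P2 (x, θb) / x ∧ pd1 P2 (x, θb) / x ≤ 2 * A := by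
        intro x hx
        rw [Set.mem_Ioo] at hx
        have hdist : dist x ϱb < δ1 := by
          rw [Real.dist_eq, abs_lt]; constructor <;> linarith
        have hm := hδ1p hdist
        rw [Real.dist_eq, abs_lt] at hm
        constructor <;> linarith [hm.1, hm.2]
      have hb2 : ∀ t ∈ Ioo (θb - δ) (θb + δ),
          Cc / 2 ≤ ϱ * (pd2 (pd2 E2) (ϱ, t) * (1 - θb / t) + pd2 E2 (ϱ, t) * (θb / t ^ 2)) ∧
          ϱ * (pd2 (pd2 E2) (ϱ, t) * (1 - θb / t) + pd2 E2 (ϱ, t) * (θb / t ^ 2)) ≤ 2 * Cc := by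
        intro t ht
        rw [Set.mem_Ioo] at ht
        have hdist : dist ((ϱ, t) : ℝ × ℝ) ((ϱb, θb) : ℝ × ℝ) < δ2 := by
          rw [Prod.dist_eq]
          apply max_lt
          · rw [Real.dist_eq, abs_lt]; constructor <;> linarith
          · rw [Real.dist_eq, abs_lt]; constructor <;> linarith
        have hm := hδ2p hdist
        rw [Real.dist_eq, abs_lt] at hm
        constructor <;> linarith [hm.1, hm.2]
      have hq1 := aux_quad (fun r => Ψ r θb)
        (fun r => e r θb - θb * s r θb + p r θb / r - c)
        (fun r => pd1 P2 (r, θb) / r) ϱb δ (A / 2) (2 * A) hδpos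
        (fun x hx => hΨ1' x (hxpos x hx)) (fun x hx => hΨ1'' x (hxpos x hx)) hb1
        part1
        (by
          show e ϱb θb - θb * s ϱb θb + p ϱb θb / ϱb - c = 0
          rw [hc]; ring)
      obtain ⟨hlow1, hup1⟩ := hq1 ϱ (Set.mem_Ioo.mpr ⟨by linarith, by linarith⟩)
      have L1 : A / 2 / 2 * (ϱ - ϱb) ^ 2 ≤ Ψ ϱ θb := hlow1
      have U1 : Ψ ϱ θb ≤ 2 * A / 2 * (ϱ - ϱb) ^ 2 := hup1
      have hq2 := aux_quad (fun t => Ψ ϱ t - Ψ ϱ θb)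
        (fun t => ϱ * pd2 E2 (ϱ, t) * (1 - θb / t))
        (fun t => ϱ * (pd2 (pd2 E2) (ϱ, t) * (1 - θb / t) + pd2 E2 (ϱ, t) * (θb / t ^ 2)))
        θb δ (Cc / 2) (2 * Cc) hδpos
        (fun t ht => (hΨ2' ϱ t hϱpos (htpos t ht)).sub_const _)
        (fun t ht => hΨ2'' ϱ t hϱpos (htpos t ht)) hb2
        (sub_self _)
        (by
          show ϱ * pd2 E2 (ϱ, θb) * (1 - θb / θb) = 0
          rw [div_self (ne_of_gt hθb)]; ring)
      obtain ⟨hlow2, hup2⟩ := hq2 θ (Set.mem_Ioo.mpr ⟨by linarith, by linarith⟩)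
      have L2 : Cc / 2 / 2 * (θ - θb) ^ 2 ≤ Ψ ϱ θ - Ψ ϱ θb := hlow2
      have U2 : Ψ ϱ θ - Ψ ϱ θb ≤ 2 * Cc / 2 * (θ - θb) ^ 2 := hup2
      clear_value U E2 S2 P2 c δ
      have e1 : |ϱ - ϱb| ^ 2 = (ϱ - ϱb) ^ 2 := sq_abs _
      have e2 : |θ - θb| ^ 2 = (θ - θb) ^ 2 := sq_abs _
      constructor
      · rw [e1, e2]
        have m1 := mul_le_mul_of_nonneg_right (min_le_left (A / 4) (Cc / 4))
          (sq_nonneg (ϱ - ϱb))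
        have m2 := mul_le_mul_of_nonneg_right (min_le_right (A / 4) (Cc / 4))
          (sq_nonneg (θ - θb))
        linarith [L1, L2, m1, m2]
      · rw [e1, e2]
        have m1 := mul_le_mul_of_nonneg_right (le_max_left A Cc) (sq_nonneg (ϱ - ϱb))
        have m2 := mul_le_mul_of_nonneg_right (le_max_right A Cc) (sq_nonneg (θ - θb))
        linarith [U1, U2, m1, m2]
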